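/- For u, v ∈ {0,1}^n with d_H(u,v) = ε + 1 and ε/n < 1/2, the normalized intersection of the two ε-balls satisfies I^ε_{ε+1} ≥ 2^{-n}(2^ε - 1). -/

import Mathlib

/-!
Dropping the factor `∑ᵢ C(n - d, i)` (each such sum contains `C(n - d, 0) = 1`) bounds
`2ⁿ · I^ε_d` below by `∑ₖ C(d, k)`. For `d = ε + 1` the range is `1 ≤ k ≤ ε`, and
`C(ε + 1, k) ≥ C(ε, k)` with `∑_{k=1}^{ε} C(ε, k) = 2^ε - 1`.
-/

/-- Normalized volume of the intersection of two Hamming `ε`-balls in `{0,1}^n`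
whose centers are at Hamming distance `d`. -/
noncomputable def Iball (n ε d : ℕ) : ℝ :=
  (∑ k ∈ Finset.Icc (d - ε) (min ε d),
      (d.choose k : ℝ) *
        ∑ i ∈ Finset.range (min (ε - k) (ε + k - d) + 1), ((n - d).choose i : ℝ)) / 2 ^ n

open Finset

theorem Nat.sum_Icc_one_choose_add_one (m : ℕ) : ∑ k ∈ Icc 1 m, m.choose k + 1 = 2 ^ m := by
  rw [← Nat.sum_range_choose, range_eq_Ico, sum_eq_sum_Ico_succ_bot (Nat.succ_pos m),
    Nat.choose_zero_right, add_comm]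
  rfl

theorem two_pow_le_sum_Icc_one_choose_succ_add_one (m : ℕ) :
    2 ^ m ≤ ∑ k ∈ Icc 1 m, (m + 1).choose k + 1 := by
  rw [← Nat.sum_Icc_one_choose_add_one]
  exact Nat.add_le_add_right (sum_le_sum fun k _ => Nat.choose_le_succ m k) 1

theorem one_le_sum_range_choose (m r : ℕ) : 1 ≤ ∑ i ∈ range (r + 1), m.choose i := by
  simpa using single_le_sum (f := fun i => m.choose i) (fun _ _ => Nat.zero_le _)
    (mem_range.2 r.succ_pos)

theorem sum_choose_div_le_Iball (n ε d : ℕ) :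
    (∑ k ∈ Icc (d - ε) (min ε d), (d.choose k : ℝ)) / 2 ^ n ≤ Iball n ε d := by
  unfold Iball
  gcongr with k
  exact le_mul_of_one_le_right (Nat.cast_nonneg _) (mod_cast one_le_sum_range_choose _ _)

theorem intersection_lower_bound_eps_plus_one_general (n ε : ℕ) :
    ((2 : ℝ) ^ ε - 1) / 2 ^ n ≤ Iball n ε (ε + 1) := by
  have hbinom : (2 : ℝ) ^ ε - 1 ≤ ∑ k ∈ Icc 1 ε, ((ε + 1).choose k : ℝ) := by
    have : (2 : ℝ) ^ ε ≤ ∑ k ∈ Icc 1 ε, ((ε + 1).choose k : ℝ) + 1 :=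
      mod_cast two_pow_le_sum_Icc_one_choose_succ_add_one ε
    linarith
  calc ((2 : ℝ) ^ ε - 1) / 2 ^ n ≤ (∑ k ∈ Icc 1 ε, ((ε + 1).choose k : ℝ)) / 2 ^ n := by
        gcongr
    _ ≤ Iball n ε (ε + 1) := by
        simpa [Nat.add_sub_cancel_left] using sum_choose_div_le_Iball n ε (ε + 1)

theorem intersection_lower_bound_eps_plus_one (n ε : ℕ) (u v : Fin n → Bool)
    (hd : hammingDist u v = ε + 1) (hhalf : (ε : ℝ) / n < 1/2) :
    ((2 : ℝ) ^ ε - 1) / 2 ^ n ≤ Iball n ε (ε + 1) :=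
  intersection_lower_bound_eps_plus_one_general n ε
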